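/- arXiv:1404.4375 — 3 statements merged into one kernel-verified Lean document; each statement's English description precedes it below -/
import Mathlib

section
/- Let v ∈ ℤ^d be a primitive vector. Then the determinant (covolume) of the (d-1)-dimensional lattice ℤ^d ∩ v^⊥ inside the hyperplane v^⊥ equals ‖v‖_2, i.e. det(ℤ^d ∩ v^⊥) = ‖v‖_2. -/
open scoped BigOperators
open Matrix

/-- Bezout for a finite family of integers with gcd 1. -/
lemma bezout_fin {d : ℕ} (v : Fin d → ℤ) (hv : Finset.univ.gcd v = 1) :
    ∃ u : Fin d → ℤ, ∑ k, u k * v k = 1 := by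
  have h1 : (1 : ℤ) ∈ Ideal.span (Set.range v) := by
    set I : Ideal ℤ := Ideal.span (Set.range v) with hI
    obtain ⟨g, hg⟩ := (IsPrincipalIdealRing.principal I).principal
    have hdvd : ∀ k, g ∣ v k := by
      intro k
      have : v k ∈ I := Ideal.subset_span ⟨k, rfl⟩
      rw [hg, Ideal.submodule_span_eq, Ideal.mem_span_singleton] at this
      exact this
    have hdg : g ∣ Finset.univ.gcd v := Finset.dvd_gcd fun k _ => hdvd k
    rw [hv] at hdg
    have hgu : IsUnit g := isUnit_of_dvd_one hdg
    have : I = ⊤ := by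
      rw [hg, Ideal.submodule_span_eq, Ideal.span_singleton_eq_top]
      exact hgu
    rw [this]; trivial
  rw [← Ideal.submodule_span_eq, Finsupp.mem_span_range_iff_exists_finsupp] at h1
  obtain ⟨c, hc⟩ := h1
  exact ⟨fun k => c k, by rw [← hc, Finsupp.sum_fintype] <;> simp [mul_comm]⟩

/-- Main integer identity: the Gram determinant of a basis of `v^⊥ ∩ ℤ^d`
equals `‖v‖²`. -/
lemma gram_det_eq (n d : ℕ) (hdn : n + 1 = d) (v u : Fin d → ℤ)
    (hu : ∑ k, u k * v k = 1)
    (w : Fin n → Fin d → ℤ)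
    (hind : LinearIndependent ℤ w)
    (horth : ∀ i, ∑ k, w i k * v k = 0)
    (hspan : ∀ x : Fin d → ℤ, (∑ k, x k * v k = 0) →
      ∃ c : Fin n → ℤ, x = ∑ i, c i • w i) :
    (Matrix.of fun i j : Fin n => ∑ k, w i k * w j k).det = ∑ k, v k * v k := by
  classical
  set q : ℤ := ∑ k, v k * v k with hq
  let e : (Fin n ⊕ Fin 1) ≃ Fin d := finSumFinEquiv.trans (finCongr hdn)
  let fam : Fin n ⊕ Fin 1 → Fin d → ℤ := Sum.elim w (fun _ => u)
  have hsum : ∀ (f : Fin d → ℤ), ∑ j' : Fin n ⊕ Fin 1, f (e j') = ∑ k, f k :=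
    fun f => Equiv.sum_comp e f
  -- pairing computation
  have key : ∀ (g : Fin n ⊕ Fin 1 → ℤ),
      (∑ k, (∑ i, g i • fam i) k * v k) = ∑ i, g i * (∑ k, fam i k * v k) := by
    intro g
    calc ∑ k, (∑ i, g i • fam i) k * v k
        = ∑ k, ∑ i, g i * fam i k * v k := by
          simp [Finset.sum_apply, Finset.sum_mul, add_mul]
      _ = ∑ i, ∑ k, g i * fam i k * v k := Finset.sum_comm
      _ = ∑ i, g i * ∑ k, fam i k * v k := by
          simp [Finset.mul_sum, mul_assoc]
  -- linear independence of fam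
  have li : LinearIndependent ℤ fam := by
    rw [Fintype.linearIndependent_iff]
    intro g hg
    have h0 : ∑ i, g i * (∑ k, fam i k * v k) = 0 := by
      rw [← key g, hg]; simp
    rw [Fintype.sum_sum_type] at h0
    simp only [fam, Sum.elim_inl, Sum.elim_inr, horth, mul_zero, hu, mul_one,
      Finset.sum_const_zero, zero_add, Fin.sum_univ_one] at h0
    have hr : ∀ j : Fin 1, g (Sum.inr j) = 0 := by
      intro j; fin_cases j; simpa using h0
    have hsum0 : ∑ i, g (Sum.inl i) • w i = 0 := by
      have h2 := hg
      rw [Fintype.sum_sum_type] at h2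
      simp only [fam, Sum.elim_inl, Sum.elim_inr, Fin.sum_univ_one, hr, zero_smul,
        add_zero] at h2
      exact h2
    have hl := Fintype.linearIndependent_iff.mp hind (fun i => g (Sum.inl i)) hsum0
    rintro (i | j)
    · exact hl i
    · exact hr j
  -- fam spans
  have sp : ⊤ ≤ Submodule.span ℤ (Set.range fam) := by
    intro x _
    rw [Submodule.mem_span_range_iff_exists_fun]
    set t : ℤ := ∑ k, x k * v k with ht
    have hy : ∑ k, (x - t • u) k * v k = 0 := by
      have h3 : ∑ k, (x - t • u) k * v k = (∑ k, x k * v k) - t * ∑ k, u k * v k := by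
        simp [sub_mul, Finset.sum_sub_distrib, Finset.mul_sum, mul_assoc]
      rw [h3, hu, mul_one, ← ht, sub_self]
    obtain ⟨c, hc⟩ := hspan (x - t • u) hy
    refine ⟨Sum.elim c (fun _ => t), ?_⟩
    rw [Fintype.sum_sum_type]
    simp only [fam, Sum.elim_inl, Sum.elim_inr, Fin.sum_univ_one]
    rw [← hc]
    abel
  -- the basis and unimodularity of N
  let B : Module.Basis (Fin n ⊕ Fin 1) ℤ (Fin d → ℤ) := Module.Basis.mk li sp
  let B' : Module.Basis (Fin d) ℤ (Fin d → ℤ) := B.reindex e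
  let std : Module.Basis (Fin d) ℤ (Fin d → ℤ) := Pi.basisFun ℤ (Fin d)
  let C : Matrix (Fin d) (Fin d) ℤ := std.toMatrix B'
  have hCunit : IsUnit C.det := by
    have h := Module.Basis.toMatrix_mul_toMatrix_flip std B'
    have h2 := congrArg Matrix.det h
    rw [Matrix.det_mul, Matrix.det_one] at h2
    exact IsUnit.of_mul_eq_one _ h2
  let N : Matrix (Fin n ⊕ Fin 1) (Fin n ⊕ Fin 1) ℤ := Matrix.of fun i j => fam i (e j)
  let M : Matrix (Fin n ⊕ Fin 1) (Fin n ⊕ Fin 1) ℤ :=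
    Matrix.of fun i j => (Sum.elim w (fun _ => v)) i (e j)
  let G : Matrix (Fin n) (Fin n) ℤ := Matrix.of fun i j => ∑ k, w i k * w j k
  have hNC : N.det = C.det := by
    have hNeq : N = (Matrix.reindex e.symm e.symm) Cᵀ := by
      ext i j
      simp only [N, Matrix.of_apply, Matrix.reindex_apply, Matrix.submatrix_apply,
        Matrix.transpose_apply, Equiv.symm_symm, C, Module.Basis.toMatrix_apply, B',
        Module.Basis.reindex_apply, Equiv.symm_apply_apply, std, Pi.basisFun_repr, B,
        Module.Basis.mk_apply]
    rw [hNeq, Matrix.det_reindex_self, Matrix.det_transpose]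
  have hNunit : IsUnit N.det := hNC ▸ hCunit
  -- N * Mᵀ is block triangular with blocks G and 1
  have hNM : N * M.transpose =
      Matrix.fromBlocks G 0 (Matrix.of fun (_ : Fin 1) j => ∑ k, u k * w j k)
        (Matrix.of fun _ _ => (1 : ℤ)) := by
    ext i j
    rcases i with i | i <;> rcases j with j | j <;>
      simp only [Matrix.mul_apply, Matrix.transpose_apply, N, M, Matrix.of_apply, fam,
        Sum.elim_inl, Sum.elim_inr, Matrix.fromBlocks_apply₁₁, Matrix.fromBlocks_apply₁₂,
        Matrix.fromBlocks_apply₂₁, Matrix.fromBlocks_apply₂₂, Matrix.zero_apply]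
    · exact Equiv.sum_comp e fun k => w i k * w j k
    · rw [Equiv.sum_comp e fun k => w i k * v k]; exact horth i
    · exact Equiv.sum_comp e fun k => u k * w j k
    · rw [Equiv.sum_comp e fun k => u k * v k]; exact hu
  -- decomposition of v over the w's and u
  have hyv : ∑ k, (v - q • u) k * v k = 0 := by
    have h3 : ∑ k, (v - q • u) k * v k = (∑ k, v k * v k) - q * ∑ k, u k * v k := by
      simp [sub_mul, Finset.sum_sub_distrib, Finset.mul_sum, mul_assoc]
    rw [h3, hu, mul_one, ← hq, sub_self]
  obtain ⟨c, hc⟩ := hspan (v - q • u) hyv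
  have hvdec : ∀ k, v k = (∑ i, c i * w i k) + q * u k := by
    intro k
    have := congrFun hc k
    simp only [Pi.sub_apply, Pi.smul_apply, smul_eq_mul, Finset.sum_apply] at this
    linarith [this]
  -- M = P * N
  have hM : M = (Matrix.fromBlocks (1 : Matrix (Fin n) (Fin n) ℤ) 0
      (Matrix.of fun (_ : Fin 1) j => c j) (Matrix.of fun _ _ => q)) * N := by
    ext i j
    rcases i with i | i
    · simp [Matrix.mul_apply, Fintype.sum_sum_type, M, N, fam, Matrix.one_apply,
        Finset.sum_ite_eq, Finset.mul_sum]
    · simp only [Matrix.mul_apply, Fintype.sum_sum_type, M, N, fam, Matrix.of_apply,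
        Sum.elim_inl, Sum.elim_inr, Matrix.fromBlocks_apply₂₁, Matrix.fromBlocks_apply₂₂,
        Fin.sum_univ_one]
      simpa using hvdec (e j)
  -- determinant computations
  have hdetNM : N.det * M.det = G.det := by
    have := congrArg Matrix.det hNM
    rw [Matrix.det_mul, Matrix.det_transpose, Matrix.det_fromBlocks_zero₁₂] at this
    simpa [Matrix.det_fin_one] using this
  have hdetM : M.det = q * N.det := by
    have := congrArg Matrix.det hM
    rw [Matrix.det_mul, Matrix.det_fromBlocks_zero₁₂] at this
    simpa [Matrix.det_fin_one, Matrix.det_one] using this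
  have heps : N.det * N.det = 1 := by
    rcases Int.isUnit_iff.mp hNunit with h | h <;> rw [h] <;> norm_num
  have : G.det = q := by
    rw [← hdetNM, hdetM, mul_comm q, ← mul_assoc, heps, one_mul]
  exact this

/-- For a primitive integer vector `v ∈ ℤ^d`, the covolume of the lattice
`ℤ^d ∩ v^⊥` (computed as the square root of the Gram determinant of any
ℤ-basis `w` of it) equals the Euclidean norm of `v`. -/
theorem stmt_8 (d : ℕ) (hd : 1 ≤ d) (v : Fin d → ℤ)
    (hv : Finset.univ.gcd v = 1)
    (w : Fin (d - 1) → Fin d → ℤ)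
    (hind : LinearIndependent ℤ w)
    (horth : ∀ i, ∑ k, w i k * v k = 0)
    (hspan : ∀ x : Fin d → ℤ, (∑ k, x k * v k = 0) →
      ∃ c : Fin (d - 1) → ℤ, x = ∑ i, c i • w i) :
    Real.sqrt (Matrix.det (Matrix.of fun i j => ((∑ k, w i k * w j k : ℤ) : ℝ))) =
      Real.sqrt (∑ k, ((v k : ℝ)) ^ 2) := by
  obtain ⟨u, hu⟩ := bezout_fin v hv
  have hdn : (d - 1) + 1 = d := by omega
  have hG := gram_det_eq (d - 1) d hdn v u hu w hind horth hspan
  have hcast : (Matrix.of fun i j => ((∑ k, w i k * w j k : ℤ) : ℝ)).det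
      = ((Matrix.of fun i j : Fin (d-1) => ∑ k, w i k * w j k).det : ℝ) := by
    rw [show (Matrix.of fun i j => ((∑ k, w i k * w j k : ℤ) : ℝ))
        = (Matrix.of fun i j : Fin (d-1) => ∑ k, w i k * w j k).map
          (Int.castRingHom ℝ) from rfl, ← RingHom.mapMatrix_apply, ← RingHom.map_det]
    simp
  rw [hcast, hG]
  push_cast
  congr 1
  exact Finset.sum_congr rfl fun k _ => (sq (v k : ℝ)).symm ▸ by ring
end

section
/- Let Π₁ = A^{-1}([-ε,ε]^3) where A is the explicit 3×3 matrix with columns a₁ = (ε/√3, ε/√3, -2ε/√3), a₂ = (2ε/√3, -ε/√3, -ε/√3), a₃ = (1/(3ε²), 1/(3ε²), 1/(3ε²)), and 0 < ε ≤ 1/2. Then the first successive minimum of the cube [-ε,ε]^3 with respect to the lattice Λ₁ = Aℤ^3 equals 2/√3. -/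
open Matrix
open scoped BigOperators Pointwise

/-!
Write `t = ε/√3` and `x = (p, q, r) ∈ ℤ³`. The coordinates of `Ax` are
`t(p + 2q) + r/(3ε²)`, `t(p - q) + r/(3ε²)` and `-t(2p + q) + r/(3ε²)`, and they sum to `r/ε²`.
If `r ≠ 0`, some coordinate has absolute value at least `1/(3ε²) ≥ 4/3 > 2t`, because `ε ≤ 1/2`.
If `r = 0`, the coordinates are `t` times integers, and the only integer pair `(p, q)` with
`|p + 2q|, |p - q|, |2p + q| ≤ 1` is `(0, 0)`; hence a nonzero lattice point has sup norm at least
`2t = (2/√3) ε`, with equality at `a₁ = A e₁ = t (1, 1, -2)`.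
-/

/-- The first successive minimum of a set `M ⊆ ℝ³` with respect to the lattice
`Aℤ³`: the infimum of `μ > 0` such that `μM` contains a nonzero lattice point. -/
noncomputable def firstMin (A : Matrix (Fin 3) (Fin 3) ℝ) (M : Set (Fin 3 → ℝ)) : ℝ :=
  sInf {μ : ℝ | 0 < μ ∧ ∃ x : Fin 3 → ℤ, x ≠ 0 ∧
    A.mulVec (fun i => (x i : ℝ)) ∈ μ • M}

theorem mem_smul_cube_iff {ι : Type*} {ε μ : ℝ} (hμ : 0 < μ) (v : ι → ℝ) :
    v ∈ μ • {z : ι → ℝ | ∀ i, |z i| ≤ ε} ↔ ∀ i, |v i| ≤ μ * ε := by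
  rw [Set.mem_smul_set_iff_inv_smul_mem₀ hμ.ne']
  simp only [Set.mem_ofPred_eq, Pi.smul_apply, smul_eq_mul, abs_mul, abs_inv, abs_of_pos hμ,
    inv_mul_le_iff₀ hμ]

theorem firstMin_cube_eq {A : Matrix (Fin 3) (Fin 3) ℝ} {ε c : ℝ} (hε : 0 < ε) (hc : 0 < c)
    (x₀ : Fin 3 → ℤ) (hx₀ : x₀ ≠ 0) (hAx₀ : ∀ i, |A.mulVec (fun j => (x₀ j : ℝ)) i| ≤ c * ε)
    (hmin : ∀ x : Fin 3 → ℤ, x ≠ 0 → ∃ i, c * ε ≤ |A.mulVec (fun j => (x j : ℝ)) i|) :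
    firstMin A {z : Fin 3 → ℝ | ∀ i, |z i| ≤ ε} = c := by
  refine IsLeast.csInf_eq ⟨⟨hc, x₀, hx₀, (mem_smul_cube_iff hc _).2 hAx₀⟩, ?_⟩
  rintro μ ⟨hμ, x, hx, hAx⟩
  obtain ⟨i, hi⟩ := hmin x hx
  exact le_of_mul_le_mul_right (hi.trans ((mem_smul_cube_iff hμ _).1 hAx i)) hε

theorem Finset.exists_abs_sum_div_card_le {ι : Type*} [Fintype ι] [Nonempty ι] (v : ι → ℝ) :
    ∃ i, |∑ j, v j| / Fintype.card ι ≤ |v i| := by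
  obtain ⟨i, -, hi⟩ := Finset.exists_le_of_sum_le Finset.univ_nonempty
    (f := fun _ => |∑ j, v j| / Fintype.card ι) (g := fun i => |v i|) (by
      rw [Finset.sum_const, Finset.card_univ, nsmul_eq_mul,
        mul_div_cancel₀ _ (Nat.cast_ne_zero.2 Fintype.card_ne_zero)]
      exact Finset.abs_sum_le_sum_abs _ _)
  exact ⟨i, hi⟩

theorem Int.eq_zero_of_abs_le_one {p q : ℤ} (h₁ : |p + 2 * q| ≤ 1) (h₂ : |p - q| ≤ 1)
    (h₃ : |2 * p + q| ≤ 1) : p = 0 ∧ q = 0 := by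
  rw [abs_le] at h₁ h₂ h₃
  omega

/-- The matrix `A` whose columns generate the lattice `Λ₁`. -/
noncomputable def latticeMatrix (ε : ℝ) : Matrix (Fin 3) (Fin 3) ℝ :=
  !![ε / Real.sqrt 3,    2*ε / Real.sqrt 3, 1/(3*ε^2);
     ε / Real.sqrt 3,    -ε / Real.sqrt 3,  1/(3*ε^2);
     -2*ε / Real.sqrt 3, -ε / Real.sqrt 3,  1/(3*ε^2)]

section latticeMatrix

variable {ε : ℝ}

theorem latticeMatrix_mulVec (y : Fin 3 → ℝ) :
    latticeMatrix ε *ᵥ y =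
      ![ε / √3 * (y 0 + 2 * y 1) + y 2 / (3 * ε ^ 2),
        ε / √3 * (y 0 - y 1) + y 2 / (3 * ε ^ 2),
        -(ε / √3 * (2 * y 0 + y 1)) + y 2 / (3 * ε ^ 2)] := by
  ext i
  fin_cases i <;>
    simp [latticeMatrix, mulVec, dotProduct, Fin.sum_univ_three] <;> ring

theorem sum_latticeMatrix_mulVec (hε : ε ≠ 0) (y : Fin 3 → ℝ) :
    ∑ i, (latticeMatrix ε *ᵥ y) i = y 2 / ε ^ 2 := by
  simp only [latticeMatrix_mulVec, Fin.sum_univ_three, cons_val_zero, cons_val_one, cons_val]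
  field_simp
  ring

theorem abs_latticeMatrix_mulVec_basis_le (hε : 0 < ε) (i : Fin 3) :
    |(latticeMatrix ε *ᵥ fun j => ((![1, 0, 0] : Fin 3 → ℤ) j : ℝ)) i| ≤ 2 / √3 * ε := by
  have ht : 0 ≤ ε / √3 := by positivity
  rw [latticeMatrix_mulVec, show 2 / √3 * ε = 2 * (ε / √3) by ring]
  fin_cases i <;> simp [abs_of_nonneg ht] <;> linarith

theorem exists_le_abs_latticeMatrix_mulVec (hε : 0 < ε) (hε' : ε ≤ 1 / 2)
    (x : Fin 3 → ℤ) (hx : x ≠ 0) :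
    ∃ i, 2 / √3 * ε ≤ |(latticeMatrix ε *ᵥ fun j => (x j : ℝ)) i| := by
  by_cases hr : x 2 = 0
  · by_contra! hlt
    have coord_le_one : ∀ (n : ℤ) (i : Fin 3),
        |(latticeMatrix ε *ᵥ fun j => (x j : ℝ)) i| = ε / √3 * |(n : ℝ)| → |n| ≤ 1 := by
      intro n i hn
      have h := hlt i
      rw [hn, show 2 / √3 * ε = ε / √3 * 2 by ring] at h
      have : |(n : ℝ)| < 2 := lt_of_mul_lt_mul_left h (by positivity)
      exact Int.lt_add_one_iff.1 (by exact_mod_cast this)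
    suffices |x 0 + 2 * x 1| ≤ 1 ∧ |x 0 - x 1| ≤ 1 ∧ |2 * x 0 + x 1| ≤ 1 by
      obtain ⟨hp, hq⟩ := Int.eq_zero_of_abs_le_one this.1 this.2.1 this.2.2
      exact hx (funext fun i => by fin_cases i <;> simp [hp, hq, hr])
    have ht : 0 ≤ ε / √3 := by positivity
    refine ⟨coord_le_one _ 0 ?_, coord_le_one _ 1 ?_, coord_le_one _ 2 ?_⟩ <;>
      simp [latticeMatrix_mulVec, hr, abs_mul, abs_of_nonneg ht]
  · obtain ⟨i, hi⟩ := Finset.exists_abs_sum_div_card_le (latticeMatrix ε *ᵥ fun j => (x j : ℝ))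
    refine ⟨i, le_trans ?_ hi⟩
    have hr1 : (1 : ℝ) ≤ |(x 2 : ℝ)| := by exact_mod_cast Int.one_le_abs hr
    have h3 : 1 ≤ √3 := Real.one_le_sqrt.2 (by norm_num)
    rw [sum_latticeMatrix_mulVec hε.ne', abs_div, abs_of_pos (by positivity : 0 < ε ^ 2),
      Fintype.card_fin, Nat.cast_ofNat, div_div, div_mul_eq_mul_div,
      div_le_div_iff₀ (by positivity) (by positivity)]
    have hε3 : ε ^ 3 ≤ (1 / 2) ^ 3 := pow_le_pow_left₀ hε.le hε' 3
    have : 6 * ε ^ 3 < |(x 2 : ℝ)| * √3 := by nlinarith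
    linarith

end latticeMatrix

/-- For `0 < ε ≤ 1/2` and the explicit matrix `A` with columns
`(ε/√3, ε/√3, -2ε/√3)`, `(2ε/√3, -ε/√3, -ε/√3)`, `(1/(3ε²), 1/(3ε²), 1/(3ε²))`,
the first successive minimum of the cube `[-ε,ε]³` with respect to the lattice
`Λ₁ = Aℤ³` equals `2/√3`. -/
theorem stmt_14 (ε : ℝ) (hε0 : 0 < ε) (hε : ε ≤ 1/2) :
    firstMin
      !![ε / Real.sqrt 3,    2*ε / Real.sqrt 3, 1/(3*ε^2);
         ε / Real.sqrt 3,    -ε / Real.sqrt 3,  1/(3*ε^2);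
         -2*ε / Real.sqrt 3, -ε / Real.sqrt 3,  1/(3*ε^2)]
      {z : Fin 3 → ℝ | ∀ i, |z i| ≤ ε} = 2 / Real.sqrt 3 := by
  exact firstMin_cube_eq (A := latticeMatrix ε) hε0 (by positivity) ![1, 0, 0]
    (fun h => by simpa using congrFun h 0) (abs_latticeMatrix_mulVec_basis_le hε0)
    (exists_le_abs_latticeMatrix_mulVec hε0 hε)
end

section
/- If t₁ > 1 and t₂ > 0 satisfy t₁² t₂^{2(d-1)} ≤ t₁² + (d-1)t₂², then t₂ ≤ c_d, where c_d is the positive root of t^{2(d-1)} - (d-1)t² - 1. -/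
/-- If `t₁ > 1` and `t₂ > 0` satisfy `t₁² t₂^(2(d-1)) ≤ t₁² + (d-1)t₂²`, then
`t₂ ≤ c_d`, the positive root of `t^(2(d-1)) - (d-1)t² - 1`. -/
theorem stmt_17 (d : ℕ) (hd : 2 ≤ d) (c : ℝ) (hc : 0 < c)
    (hroot : c ^ (2 * (d - 1)) - (d - 1 : ℝ) * c ^ 2 - 1 = 0)
    (t₁ t₂ : ℝ) (ht₁ : 1 < t₁) (ht₂ : 0 < t₂)
    (h : t₁ ^ 2 * t₂ ^ (2 * (d - 1)) ≤ t₁ ^ 2 + (d - 1 : ℝ) * t₂ ^ 2) :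
    t₂ ≤ c := by
  by_contra hlt
  push_neg at hlt
  obtain ⟨k, rfl⟩ : ∃ k, d = k + 2 := ⟨d - 2, by omega⟩
  have e1 : k + 2 - 1 = k + 1 := by omega
  rw [e1] at hroot h
  push_cast at hroot h
  have hc2k2 : c ^ (2 * (k + 1)) = c ^ (2 * k) * c ^ 2 := by ring
  have ht2k2 : t₂ ^ (2 * (k + 1)) = t₂ ^ (2 * k) * t₂ ^ 2 := by ring
  rw [hc2k2] at hroot
  rw [ht2k2] at h
  have hck : ((k : ℝ) + 1) < c ^ (2 * k) := by
    rcases Nat.eq_zero_or_pos k with rfl | hk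
    · exfalso; simp at hroot; nlinarith
    · have h2 : (0 : ℝ) < c ^ 2 := by positivity
      nlinarith
  have hpow : c ^ (2 * k) ≤ t₂ ^ (2 * k) := pow_le_pow_left₀ hc.le hlt.le _
  have hsq : c ^ 2 < t₂ ^ 2 := by nlinarith
  have ht1 : (0 : ℝ) < t₁ ^ 2 := by positivity
  have hstep : t₁ ^ 2 * (t₂ ^ (2 * k) * t₂ ^ 2) ≤ t₁ ^ 2 * (1 + ((k : ℝ) + 1) * t₂ ^ 2) := by
    nlinarith [mul_nonneg (mul_nonneg (by positivity : (0:ℝ) ≤ (k:ℝ)+1) (sq_nonneg t₂))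
      (by nlinarith : (0:ℝ) ≤ t₁ ^ 2 - 1)]
  have hA : t₂ ^ (2 * k) * t₂ ^ 2 ≤ 1 + ((k : ℝ) + 1) * t₂ ^ 2 :=
    le_of_mul_le_mul_left hstep ht1
  nlinarith [mul_pos ht₂ ht₂]
end
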